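/- arXiv:1112.0670 — 2 statements merged into one kernel-verified Lean document; each statement's English description precedes it below -/
import Mathlib

section
/- Under the standing hypotheses, the following are equivalent: (a) R is an α-partial Galois extension of R^α; (b) R·t·R = R⋆_αG, where t = Σ_{g∈G} 1_gδ_g; (c) the map τ' : R⊗_{R^α}R → R⋆_αG, τ'(x⊗y) = Σ_{g∈G} x·α_g(y·1_{g⁻¹})δ_g, is surjective. -/
/-!
The skew groupoid ring elements `ε x · t · ε y` are exactly the values
`τ'(x ⊗ y) = ∑_g x α_g(y 1_{g⁻¹}) δ_g`, so `R t R` is the image of `τ'` and (b) ⇔ (c).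
A Galois coordinate system `(xᵢ, yᵢ)` satisfies the orthogonality relations
`∑ᵢ α_h(xᵢ 1_{h⁻¹}) α_g(yᵢ 1_{g⁻¹}) = δ_{g,h} 1_h`; hence
`c δ_h = ∑ᵢ τ'(c α_h(xᵢ 1_{h⁻¹}) ⊗ yᵢ)` for every `c ∈ D_h`, and `τ'` is onto.
Conversely, writing `1 = ∑_e 1_e δ_e` as `∑ᵢ τ'(xᵢ ⊗ yᵢ)` and comparing coefficients
in the direct sum `⊕_g D_g δ_g` yields a Galois coordinate system.
-/

universe u

/-- A groupoid in the algebraic sense of Lawson: a non-empty set `G` with a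
partially defined binary operation (here modeled by a total operation `mul`
whose value is only constrained when it is defined, i.e. when `d g = r h`),
an inversion `inv`, and domain/range maps `d`, `r`. -/
structure AlgGroupoid (G : Type u) where
  mul : G → G → G
  inv : G → G
  d : G → G
  r : G → G
  mul_assoc' : ∀ g h l, d g = r h → d h = r l → mul (mul g h) l = mul g (mul h l)
  mul_d : ∀ g, mul g (d g) = g
  r_mul : ∀ g, mul (r g) g = g
  inv_mul : ∀ g, mul (inv g) g = d g
  mul_inv : ∀ g, mul g (inv g) = r g
  d_mul : ∀ g h, d g = r h → d (mul g h) = d h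
  r_mul' : ∀ g h, d g = r h → r (mul g h) = r g
  d_inv : ∀ g, d (inv g) = r g
  r_inv : ∀ g, r (inv g) = d g
  inv_inv : ∀ g, inv (inv g) = g
  d_d : ∀ g, d (d g) = d g
  r_d : ∀ g, r (d g) = d g
  d_r : ∀ g, d (r g) = r g
  r_r : ∀ g, r (r g) = r g

/-- `e` is an identity element of the groupoid `𝔾`, i.e. an element of `G₀`. -/
def AlgGroupoid.isId {G : Type u} (𝔾 : AlgGroupoid G) (e : G) : Prop := 𝔾.d e = e

instance {G : Type u} [DecidableEq G] (𝔾 : AlgGroupoid G) (e : G) : Decidable (𝔾.isId e) :=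
  inferInstanceAs (Decidable (𝔾.d e = e))

/-- `D` is a two-sided ideal of `E` (both being subsets of an ambient
non-unital ring `T`). -/
structure IsIdealIn {T : Type u} [NonUnitalRing T] (D E : Set T) : Prop where
  subset : D ⊆ E
  zero_mem : (0 : T) ∈ D
  add_mem : ∀ ⦃x y : T⦄, x ∈ D → y ∈ D → x + y ∈ D
  neg_mem : ∀ ⦃x : T⦄, x ∈ D → -x ∈ D
  mul_mem_left : ∀ ⦃x y : T⦄, x ∈ E → y ∈ D → x * y ∈ D
  mul_mem_right : ∀ ⦃x y : T⦄, x ∈ D → y ∈ E → x * y ∈ D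

/-- `u` is a (two-sided) multiplicative identity element of the subset `D`. -/
def IsIdentityElem {T : Type u} [NonUnitalRing T] (u : T) (D : Set T) : Prop :=
  u ∈ D ∧ ∀ x ∈ D, u * x = x ∧ x * u = x

/-- A partial action `α = ({D_g}, {α_g})` of a groupoid `𝔾` on the ring whose
carrier is the subset `R` of the ambient non-unital ring `T` (take
`R = Set.univ` for a partial action on `T` itself).  For each `g`, `D (r g)`
is an ideal of `R`, `D g` is an ideal of `D (r g)` and `act g` restricts to a
ring isomorphism from `D (inv g)` onto `D g`; moreover `act e` is the identity
of `D e` for identities `e`, and for composable `g, h` the map `act (mul g h)`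
extends `act g ∘ act h` (whose domain is `(act h)⁻¹ (D (inv g) ∩ D h)`). -/
structure PartialGroupoidAction {G : Type u} (𝔾 : AlgGroupoid G) (T : Type u)
    [NonUnitalRing T] (R : Set T) where
  D : G → Set T
  act : G → T → T
  ideal_r : ∀ g, IsIdealIn (D (𝔾.r g)) R
  ideal : ∀ g, IsIdealIn (D g) (D (𝔾.r g))
  bijOn : ∀ g, Set.BijOn (act g) (D (𝔾.inv g)) (D g)
  map_add : ∀ g, ∀ x ∈ D (𝔾.inv g), ∀ y ∈ D (𝔾.inv g), act g (x + y) = act g x + act g y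
  map_mul : ∀ g, ∀ x ∈ D (𝔾.inv g), ∀ y ∈ D (𝔾.inv g), act g (x * y) = act g x * act g y
  act_id : ∀ e, 𝔾.isId e → ∀ x ∈ D e, act e x = x
  dom_cond : ∀ g h, 𝔾.d g = 𝔾.r h → ∀ x ∈ D (𝔾.inv h), act h x ∈ D (𝔾.inv g) →
    x ∈ D (𝔾.inv (𝔾.mul g h))
  comp_cond : ∀ g h, 𝔾.d g = 𝔾.r h → ∀ x ∈ D (𝔾.inv h), act h x ∈ D (𝔾.inv g) →
    act g (act h x) = act (𝔾.mul g h) x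

/-- The partial action `α` is global if, for all composable `g, h`, the
composite `α_g ∘ α_h` (taken on its largest possible domain) coincides with
`α_{gh}`; since both maps always agree on the domain of the composite, this
amounts to the equality of the two domains. -/
def PartialGroupoidAction.IsGlobal {G : Type u} {𝔾 : AlgGroupoid G} {T : Type u}
    [NonUnitalRing T] {R : Set T} (α : PartialGroupoidAction 𝔾 T R) : Prop :=
  ∀ g h, 𝔾.d g = 𝔾.r h →
    {x | x ∈ α.D (𝔾.inv h) ∧ α.act h x ∈ α.D (𝔾.inv g)} = α.D (𝔾.inv (𝔾.mul g h))

/-- A realization of the (partial) skew groupoid ring `R ⋆_α G` on the ring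
`A`: the maps `δ g : D_g → A`, `x ↦ x·δ_g`, are additive, their images are
independent and span `A` (so `A = ⊕_{g ∈ G} D_g δ_g` as an additive group),
and multiplication is given by
`(x δ_g)(y δ_h) = α_g(α_{g⁻¹}(x) y) δ_{gh}` if `(g,h) ∈ G²` and `0` otherwise. -/
structure SkewRingRep {G : Type u} (𝔾 : AlgGroupoid G) {T : Type u} [NonUnitalRing T]
    {R : Set T} (α : PartialGroupoidAction 𝔾 T R) (A : Type u) [NonUnitalRing A] where
  δ : G → T → A
  map_add : ∀ g, ∀ x ∈ α.D g, ∀ y ∈ α.D g, δ g (x + y) = δ g x + δ g y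
  mul_of : ∀ g h, 𝔾.d g = 𝔾.r h → ∀ x ∈ α.D g, ∀ y ∈ α.D h,
    δ g x * δ h y = δ (𝔾.mul g h) (α.act g (α.act (𝔾.inv g) x * y))
  mul_of_ne : ∀ g h, 𝔾.d g ≠ 𝔾.r h → ∀ x ∈ α.D g, ∀ y ∈ α.D h, δ g x * δ h y = 0
  indep : ∀ (s : Finset G) (c : G → T), (∀ g, c g ∈ α.D g) →
    (∑ g ∈ s, δ g (c g)) = 0 → ∀ g ∈ s, c g = 0
  spans : ∀ a : A, ∃ (s : Finset G) (c : G → T), (∀ g, c g ∈ α.D g) ∧ a = ∑ g ∈ s, δ g (c g)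

/-- The subring `R^α` of invariants of `R` under the partial action `α`,
where `one g` denotes the identity element `1_g` of the ideal `D_g`. -/
def invariants {G : Type u} (𝔾 : AlgGroupoid G) {R : Type u} [Ring R]
    (α : PartialGroupoidAction 𝔾 R (Set.univ : Set R)) (one : G → R) : Set R :=
  {x : R | ∀ g : G, α.act g (x * one (𝔾.inv g)) = x * one g}

/-- The trace map `t_α : R → R`, `t_α(x) = ∑_{g ∈ G} α_g(x 1_{g⁻¹})`. -/
def traceMap {G : Type u} [Fintype G] (𝔾 : AlgGroupoid G) {R : Type u} [Ring R]
    (α : PartialGroupoidAction 𝔾 R (Set.univ : Set R)) (one : G → R) (x : R) : R :=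
  ∑ g : G, α.act g (x * one (𝔾.inv g))

/-- `R` is an `α`-partial Galois extension of `R^α`: there is a partial Galois
coordinate system `x_i, y_i ∈ R` with
`∑_i x_i α_g(y_i 1_{g⁻¹}) = δ_{e,g} 1_e` for all `e ∈ G₀`, `g ∈ G`. -/
def IsPartialGalois {G : Type u} [Fintype G] [DecidableEq G] (𝔾 : AlgGroupoid G)
    {R : Type u} [Ring R] (α : PartialGroupoidAction 𝔾 R (Set.univ : Set R))
    (one : G → R) : Prop :=
  ∃ (n : ℕ) (xs ys : Fin n → R), ∀ g : G,
    ∑ i, xs i * α.act g (ys i * one (𝔾.inv g)) = if 𝔾.isId g then one g else 0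


def IsIdealIn.toAddSubgroup {T : Type u} [NonUnitalRing T] {D E : Set T} (h : IsIdealIn D E) :
    AddSubgroup T where
  carrier := D
  add_mem' := fun hx hy => h.add_mem hx hy
  zero_mem' := h.zero_mem
  neg_mem' := fun hx => h.neg_mem hx

section AdditiveOn

variable {M N : Type*} [AddCommGroup M] [AddCommGroup N] {S : AddSubgroup M} {f : M → N}
  (hf : ∀ x ∈ S, ∀ y ∈ S, f (x + y) = f x + f y)
include hf

theorem map_zero_of_additiveOn : f 0 = 0 := by
  have h := hf 0 S.zero_mem 0 S.zero_mem
  rw [add_zero] at h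
  exact left_eq_add.mp h

theorem map_neg_of_additiveOn {x : M} (hx : x ∈ S) : f (-x) = -f x :=
  eq_neg_of_add_eq_zero_left <| by
    rw [← hf _ (neg_mem hx) _ hx, neg_add_cancel, map_zero_of_additiveOn hf]

theorem map_sub_of_additiveOn {x y : M} (hx : x ∈ S) (hy : y ∈ S) : f (x - y) = f x - f y := by
  rw [sub_eq_add_neg, hf _ hx _ (neg_mem hy), map_neg_of_additiveOn hf hy, ← sub_eq_add_neg]

theorem map_sum_of_additiveOn {ι : Type*} {s : Finset ι} {c : ι → M} (hc : ∀ i ∈ s, c i ∈ S) :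
    f (∑ i ∈ s, c i) = ∑ i ∈ s, f (c i) := by
  induction s using Finset.cons_induction with
  | empty => simpa using map_zero_of_additiveOn hf
  | cons a s ha ih =>
    have hs : ∀ i ∈ s, c i ∈ S := fun i hi => hc i (Finset.mem_cons_of_mem hi)
    rw [Finset.sum_cons, Finset.sum_cons, hf _ (hc a (Finset.mem_cons_self a s)) _
      (sum_mem hs), ih hs]

end AdditiveOn

theorem AddSubgroup.mem_closure_iff_exists_fin_sum {X Y A : Type*} [Neg X] [AddCommGroup A]
    {f : X → Y → A} (hf : ∀ x y, f (-x) y = -f x y) {a : A} :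
    a ∈ AddSubgroup.closure {b | ∃ x y, b = f x y} ↔
      ∃ (k : ℕ) (xs : Fin k → X) (ys : Fin k → Y), a = ∑ i, f (xs i) (ys i) := by
  constructor
  · intro ha
    induction ha using AddSubgroup.closure_induction with
    | mem b hb =>
      obtain ⟨x, y, rfl⟩ := hb
      exact ⟨1, fun _ => x, fun _ => y, by rw [Fin.sum_univ_one]⟩
    | zero => exact ⟨0, Fin.elim0, Fin.elim0, by simp⟩
    | add b c _ _ hb hc =>
      obtain ⟨k, xs, ys, rfl⟩ := hb
      obtain ⟨l, xs', ys', rfl⟩ := hc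
      refine ⟨k + l, Fin.append xs xs', Fin.append ys ys', ?_⟩
      simp [Fin.sum_univ_add]
    | neg b _ hb =>
      obtain ⟨k, xs, ys, rfl⟩ := hb
      exact ⟨k, fun i => -xs i, ys, by simp [hf]⟩
  · rintro ⟨k, xs, ys, rfl⟩
    exact sum_mem fun i _ => AddSubgroup.subset_closure ⟨xs i, ys i, rfl⟩

namespace AlgGroupoid

variable {G : Type u} (𝔾 : AlgGroupoid G)

theorem isId_r (g : G) : 𝔾.isId (𝔾.r g) := 𝔾.d_r g

theorem isId_d (g : G) : 𝔾.isId (𝔾.d g) := 𝔾.d_d g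

variable {𝔾}

theorem r_of_isId {e : G} (he : 𝔾.isId e) : 𝔾.r e = e := by
  have h := 𝔾.r_d e
  rwa [he] at h

theorem inv_of_isId {e : G} (he : 𝔾.isId e) : 𝔾.inv e = e := by
  have h := 𝔾.mul_d (𝔾.inv e)
  rw [𝔾.d_inv, r_of_isId he] at h
  rw [← h, 𝔾.inv_mul, he]

theorem eq_of_isId_inv_mul {g h : G} (hr : 𝔾.r g = 𝔾.r h) (hk : 𝔾.isId (𝔾.mul (𝔾.inv h) g)) :
    g = h := by
  have hassoc := 𝔾.mul_assoc' h (𝔾.inv h) g (𝔾.r_inv h).symm (by rw [𝔾.d_inv, hr])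
  have hk' : 𝔾.mul (𝔾.inv h) g = 𝔾.d h := by
    rw [← r_of_isId hk, 𝔾.r_mul' _ _ (by rw [𝔾.d_inv, hr]), 𝔾.r_inv]
  rwa [𝔾.mul_inv, ← hr, 𝔾.r_mul, hk', 𝔾.mul_d] at hassoc

end AlgGroupoid

namespace PartialGroupoidAction

variable {G : Type u} {𝔾 : AlgGroupoid G} {R : Type u} [Ring R]
  {α : PartialGroupoidAction 𝔾 R (Set.univ : Set R)}

theorem mem_r {g : G} {x : R} (hx : x ∈ α.D g) : x ∈ α.D (𝔾.r g) := (α.ideal g).subset hx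

theorem mem_d_of_mem_inv {g : G} {x : R} (hx : x ∈ α.D (𝔾.inv g)) : x ∈ α.D (𝔾.d g) := by
  simpa only [𝔾.r_inv] using mem_r hx

theorem act_mem {g : G} {x : R} (hx : x ∈ α.D (𝔾.inv g)) : α.act g x ∈ α.D g :=
  (α.bijOn g).mapsTo hx

theorem mem_inv_inv {g : G} {x : R} (hx : x ∈ α.D g) : x ∈ α.D (𝔾.inv (𝔾.inv g)) := by
  rwa [𝔾.inv_inv]

theorem act_act_inv {g : G} {a : R} (ha : a ∈ α.D g) : α.act g (α.act (𝔾.inv g) a) = a := by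
  rw [α.comp_cond g (𝔾.inv g) (𝔾.r_inv g).symm a (mem_inv_inv ha) (act_mem (mem_inv_inv ha)),
    𝔾.mul_inv, α.act_id _ (𝔾.isId_r g) a (mem_r ha)]

theorem act_zero (g : G) : α.act g 0 = 0 :=
  map_zero_of_additiveOn (S := (α.ideal (𝔾.inv g)).toAddSubgroup) (α.map_add g)

theorem act_sum (g : G) {ι : Type*} {s : Finset ι} {c : ι → R}
    (hc : ∀ i ∈ s, c i ∈ α.D (𝔾.inv g)) : α.act g (∑ i ∈ s, c i) = ∑ i ∈ s, α.act g (c i) :=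
  map_sum_of_additiveOn (S := (α.ideal (𝔾.inv g)).toAddSubgroup) (α.map_add g) hc

section Unital

variable {one : G → R} (hone : ∀ g, IsIdentityElem (one g) (α.D g))
include hone

theorem mul_one_of_mem {g : G} {x : R} (hx : x ∈ α.D g) : x * one g = x := ((hone g).2 x hx).2

theorem one_mul_of_mem {g : G} {x : R} (hx : x ∈ α.D g) : one g * x = x := ((hone g).2 x hx).1

theorem mul_one_mem (g : G) (x : R) : x * one g ∈ α.D g := by
  have h := (α.ideal g).mul_mem_left
    ((α.ideal_r g).mul_mem_left (Set.mem_univ x) (mem_r (hone g).1)) (hone g).1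
  rwa [mul_assoc, mul_one_of_mem hone (hone g).1] at h

theorem mul_mem_of_mem_left {g : G} {a : R} (ha : a ∈ α.D g) (y : R) : a * y ∈ α.D g := by
  have h := (α.ideal g).mul_mem_right (hone g).1
    ((α.ideal_r g).mul_mem_right (mem_r ha) (Set.mem_univ y))
  rwa [← mul_assoc, one_mul_of_mem hone ha] at h

theorem mul_mem_of_mem_right {g : G} {a : R} (ha : a ∈ α.D g) (y : R) : y * a ∈ α.D g := by
  rw [← mul_one_of_mem hone ha, ← mul_assoc]
  exact mul_one_mem hone g _

/-- Both `1_g x` and `x 1_g` lie in `D_g`, so both equal `1_g x 1_g`. -/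
theorem commute_one (g : G) (x : R) : Commute (one g) x := by
  have hl : one g * x ∈ α.D g := mul_mem_of_mem_left hone (hone g).1 x
  calc one g * x = one g * x * one g := (mul_one_of_mem hone hl).symm
    _ = x * one g := by rw [mul_assoc, one_mul_of_mem hone (mul_one_mem hone g x)]

theorem mul_one_mul_mul_one (g : G) (x y : R) : x * one g * (y * one g) = x * y * one g := by
  rw [mul_assoc, (commute_one hone g _).left_comm, mul_one_of_mem hone (hone g).1, ← mul_assoc]

theorem act_one (g : G) : α.act g (one (𝔾.inv g)) = one g := by
  have hog : α.act (𝔾.inv g) (one g) ∈ α.D (𝔾.inv g) := act_mem (mem_inv_inv (hone g).1)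
  calc α.act g (one (𝔾.inv g))
      = α.act g (one (𝔾.inv g)) * α.act g (α.act (𝔾.inv g) (one g)) := by
        rw [act_act_inv (hone g).1, mul_one_of_mem hone (act_mem (hone _).1)]
    _ = α.act g (one (𝔾.inv g) * α.act (𝔾.inv g) (one g)) :=
        (α.map_mul g _ (hone _).1 _ hog).symm
    _ = one g := by rw [one_mul_of_mem hone hog, act_act_inv (hone g).1]

theorem act_act_inv_mul {g : G} {a : R} (ha : a ∈ α.D g) (y : R) :
    α.act g (α.act (𝔾.inv g) a * y) = a * α.act g (y * one (𝔾.inv g)) := by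
  have ha' : α.act (𝔾.inv g) a ∈ α.D (𝔾.inv g) := act_mem (mem_inv_inv ha)
  have hy : α.act (𝔾.inv g) a * y = α.act (𝔾.inv g) a * (y * one (𝔾.inv g)) := by
    rw [← (commute_one hone _ y).eq, ← mul_assoc, mul_one_of_mem hone ha']
  rw [hy, α.map_mul g _ ha' _ (mul_one_mem hone _ y), act_act_inv ha]

theorem act_mul_eq_act_mul_act_inv {h : G} {a : R} (ha : a ∈ α.D (𝔾.inv h)) (w : R) :
    α.act h a * w = α.act h (a * α.act (𝔾.inv h) (w * one h)) := by
  rw [α.map_mul h _ ha _ (act_mem (mem_inv_inv (mul_one_mem hone h w))),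
    act_act_inv (mul_one_mem hone h w), ← (commute_one hone h w).eq, ← mul_assoc,
    mul_one_of_mem hone (act_mem ha)]

/-- With `k = h⁻¹g`, the element `α_{h⁻¹}(α_g(y 1_{g⁻¹}) 1_h)` is `α_k(y 1_{k⁻¹})` times
`α_k(u)`, where `u = α_{g⁻¹}(1_g 1_h)` lies in `D_{k⁻¹}` by the domain condition of `α`. -/
theorem exists_act_inv_act_mul_one_eq {g h : G} (hr : 𝔾.r g = 𝔾.r h) :
    ∃ B : R, ∀ y : R, α.act (𝔾.inv h) (α.act g (y * one (𝔾.inv g)) * one h) =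
      α.act (𝔾.mul (𝔾.inv h) g) (y * one (𝔾.inv (𝔾.mul (𝔾.inv h) g))) * B := by
  set k := 𝔾.mul (𝔾.inv h) g
  have hcomp : 𝔾.d (𝔾.inv h) = 𝔾.r g := by rw [𝔾.d_inv, hr]
  have h1 : one g * one h ∈ α.D g := mul_mem_of_mem_left hone (hone g).1 _
  set u := α.act (𝔾.inv g) (one g * one h)
  have hu : u ∈ α.D (𝔾.inv g) := act_mem (mem_inv_inv h1)
  have hgu : α.act g u = one g * one h := act_act_inv h1
  have huk : u ∈ α.D (𝔾.inv k) := α.dom_cond (𝔾.inv h) g hcomp u hu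
    (by rw [hgu]; exact mem_inv_inv (mul_mem_of_mem_right hone (hone h).1 _))
  refine ⟨α.act k u, fun y => ?_⟩
  have hmul : α.act g (y * one (𝔾.inv g)) * one h = α.act g (y * one (𝔾.inv g) * u) := by
    rw [α.map_mul g _ (mul_one_mem hone _ y) _ hu, hgu, ← mul_assoc,
      mul_one_of_mem hone (act_mem (mul_one_mem hone _ y))]
  have hyu : y * one (𝔾.inv g) * u = y * one (𝔾.inv k) * u := by
    rw [mul_assoc, one_mul_of_mem hone hu, mul_assoc, one_mul_of_mem hone huk]
  rw [hmul, α.comp_cond (𝔾.inv h) g hcomp _ (mul_mem_of_mem_right hone hu _)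
      (by rw [𝔾.inv_inv, ← hmul]; exact mul_one_mem hone h _),
    hyu, α.map_mul k _ (mul_one_mem hone _ y) _ huk]

variable [DecidableEq G]
  (horth : ∀ e f, 𝔾.isId e → 𝔾.isId f → e ≠ f → ∀ x ∈ α.D e, ∀ y ∈ α.D f, x * y = 0)
  {n : ℕ} {xs ys : Fin n → R}
  (hGal : ∀ g : G, ∑ i, xs i * α.act g (ys i * one (𝔾.inv g)) = if 𝔾.isId g then one g else 0)
include hGal

theorem sum_act_mul_act_of_galois_of_eq (g : G) :
    ∑ i, α.act g (xs i * one (𝔾.inv g)) * α.act g (ys i * one (𝔾.inv g)) = one g := by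
  have hd : ∑ i, xs i * (ys i * one (𝔾.d g)) = one (𝔾.d g) := by
    have hid := 𝔾.isId_d g
    have h := hGal (𝔾.d g)
    rw [if_pos hid, AlgGroupoid.inv_of_isId hid] at h
    refine (Finset.sum_congr rfl fun i _ => ?_).trans h
    rw [α.act_id _ hid _ (mul_one_mem hone _ _)]
  have hinv : one (𝔾.d g) * one (𝔾.inv g) = one (𝔾.inv g) :=
    one_mul_of_mem hone (mem_d_of_mem_inv (hone _).1)
  calc ∑ i, α.act g (xs i * one (𝔾.inv g)) * α.act g (ys i * one (𝔾.inv g))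
      = ∑ i, α.act g (xs i * (ys i * one (𝔾.d g)) * one (𝔾.inv g)) :=
        Finset.sum_congr rfl fun i _ => by
          rw [← α.map_mul g _ (mul_one_mem hone _ _) _ (mul_one_mem hone _ _),
            mul_one_mul_mul_one hone, mul_assoc (xs i) (ys i * _), mul_assoc (ys i), hinv,
            ← mul_assoc]
    _ = α.act g ((∑ i, xs i * (ys i * one (𝔾.d g))) * one (𝔾.inv g)) := by
        rw [Finset.sum_mul, act_sum g fun i _ => mul_one_mem hone _ _]
    _ = one g := by rw [hd, hinv, act_one hone]

theorem sum_act_mul_act_of_galois_of_ne {g h : G} (hgh : g ≠ h) (hr : 𝔾.r g = 𝔾.r h) :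
    ∑ i, α.act h (xs i * one (𝔾.inv h)) * α.act g (ys i * one (𝔾.inv g)) = 0 := by
  set k := 𝔾.mul (𝔾.inv h) g
  have hk : ¬ 𝔾.isId k := fun hk => hgh (AlgGroupoid.eq_of_isId_inv_mul hr hk)
  obtain ⟨B, hB⟩ := exists_act_inv_act_mul_one_eq hone hr
  have hB' : one (𝔾.inv h) * B ∈ α.D (𝔾.inv h) := mul_mem_of_mem_left hone (hone _).1 B
  calc ∑ i, α.act h (xs i * one (𝔾.inv h)) * α.act g (ys i * one (𝔾.inv g))
      = ∑ i, α.act h (xs i * α.act k (ys i * one (𝔾.inv k)) * (one (𝔾.inv h) * B)) :=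
        Finset.sum_congr rfl fun i _ => by
          rw [act_mul_eq_act_mul_act_inv hone (mul_one_mem hone _ _), hB, mul_assoc,
            (commute_one hone _ _).left_comm, ← mul_assoc]
    _ = α.act h ((∑ i, xs i * α.act k (ys i * one (𝔾.inv k))) * (one (𝔾.inv h) * B)) := by
        rw [Finset.sum_mul, act_sum h fun i _ => mul_mem_of_mem_right hone hB' _]
    _ = 0 := by rw [hGal, if_neg hk, zero_mul, act_zero]

include horth in
theorem sum_act_mul_act_of_galois (g h : G) :
    ∑ i, α.act h (xs i * one (𝔾.inv h)) * α.act g (ys i * one (𝔾.inv g)) =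
      if g = h then one h else 0 := by
  split_ifs with hgh
  · subst hgh
    exact sum_act_mul_act_of_galois_of_eq hone hGal g
  rcases eq_or_ne (𝔾.r g) (𝔾.r h) with hr | hr
  · exact sum_act_mul_act_of_galois_of_ne hone hGal hgh hr
  · exact Finset.sum_eq_zero fun i _ => horth _ _ (𝔾.isId_r h)
      (𝔾.isId_r g) (Ne.symm hr) _ (mem_r (act_mem (mul_one_mem hone _ _))) _
      (mem_r (act_mem (mul_one_mem hone _ _)))

end Unital

end PartialGroupoidAction

namespace SkewRingRep

open PartialGroupoidAction

variable {G : Type u} {𝔾 : AlgGroupoid G} {R : Type u} [Ring R]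
  {α : PartialGroupoidAction 𝔾 R (Set.univ : Set R)} {A : Type u} [NonUnitalRing A]
  (σ : SkewRingRep 𝔾 α A)

theorem delta_zero (g : G) : σ.δ g 0 = 0 :=
  map_zero_of_additiveOn (S := (α.ideal g).toAddSubgroup) (σ.map_add g)

theorem delta_neg {g : G} {x : R} (hx : x ∈ α.D g) : σ.δ g (-x) = -σ.δ g x :=
  map_neg_of_additiveOn (S := (α.ideal g).toAddSubgroup) (σ.map_add g) hx

theorem delta_sub {g : G} {x y : R} (hx : x ∈ α.D g) (hy : y ∈ α.D g) :
    σ.δ g (x - y) = σ.δ g x - σ.δ g y :=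
  map_sub_of_additiveOn (S := (α.ideal g).toAddSubgroup) (σ.map_add g) hx hy

theorem delta_sum (g : G) {ι : Type*} {s : Finset ι} {c : ι → R} (hc : ∀ i ∈ s, c i ∈ α.D g) :
    σ.δ g (∑ i ∈ s, c i) = ∑ i ∈ s, σ.δ g (c i) :=
  map_sum_of_additiveOn (S := (α.ideal g).toAddSubgroup) (σ.map_add g) hc

theorem delta_r_mul {g : G} {a b : R} (ha : a ∈ α.D (𝔾.r g)) (hb : b ∈ α.D g) :
    σ.δ (𝔾.r g) a * σ.δ g b = σ.δ g (a * b) := by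
  have hab : a * b ∈ α.D (𝔾.r g) := mem_r ((α.ideal g).mul_mem_left ha hb)
  rw [σ.mul_of _ _ (𝔾.d_r g) a ha b hb, 𝔾.r_mul, AlgGroupoid.inv_of_isId (𝔾.isId_r g),
    α.act_id _ (𝔾.isId_r g) a ha, α.act_id _ (𝔾.isId_r g) _ hab]

variable [Fintype G]

theorem eq_of_sum_delta_eq {c c' : G → R} (hc : ∀ g, c g ∈ α.D g) (hc' : ∀ g, c' g ∈ α.D g)
    (h : ∑ g, σ.δ g (c g) = ∑ g, σ.δ g (c' g)) (g : G) : c g = c' g := by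
  refine sub_eq_zero.mp (σ.indep Finset.univ (fun g => c g - c' g)
    (fun g => show _ ∈ (α.ideal g).toAddSubgroup from sub_mem (hc g) (hc' g)) ?_ g
    (Finset.mem_univ g))
  rw [Finset.sum_congr rfl fun g _ => σ.delta_sub (hc g) (hc' g), Finset.sum_sub_distrib, h,
    sub_self]

/-- The embedding `ε : R → R ⋆_α G` of the paper. -/
def embed [DecidableEq G] (one : G → R) (x : R) : A :=
  ∑ e ∈ Finset.univ.filter (fun e => 𝔾.isId e), σ.δ e (x * one e)

/-- The element `t` of the paper. -/
def traceElement (one : G → R) : A := ∑ g : G, σ.δ g (one g)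

/-- The map `τ' : R ⊗_{R^α} R → R ⋆_α G`, on pure tensors. -/
def tau (one : G → R) (x y : R) : A := ∑ g : G, σ.δ g (x * α.act g (y * one (𝔾.inv g)))

variable {one : G → R} (hone : ∀ g, IsIdentityElem (one g) (α.D g))
include hone

theorem tau_neg_left (x y : R) : σ.tau one (-x) y = -σ.tau one x y := by
  rw [tau, tau, ← Finset.sum_neg_distrib]
  refine Finset.sum_congr rfl fun g _ => ?_
  rw [neg_mul, σ.delta_neg (mul_mem_of_mem_right hone (act_mem (mul_one_mem hone _ y)) x)]

theorem sum_tau {k : ℕ} (xs ys : Fin k → R) :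
    ∑ i, σ.tau one (xs i) (ys i) = ∑ g, σ.δ g (∑ i, xs i * α.act g (ys i * one (𝔾.inv g))) := by
  simp only [tau]
  rw [Finset.sum_comm]
  exact Finset.sum_congr rfl fun g _ => (σ.delta_sum g fun i _ =>
    mul_mem_of_mem_right hone (act_mem (mul_one_mem hone _ _)) _).symm

variable [DecidableEq G]

theorem embed_mul_traceElement (x : R) :
    σ.embed one x * σ.traceElement one = ∑ g : G, σ.δ g (x * one g) := by
  rw [embed, traceElement, Finset.sum_mul_sum, Finset.sum_comm]
  refine Finset.sum_congr rfl fun g _ => ?_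
  rw [Finset.sum_eq_single_of_mem (𝔾.r g) (Finset.mem_filter.mpr ⟨Finset.mem_univ _, 𝔾.isId_r g⟩)
      fun e he hne => σ.mul_of_ne e g (fun hd => hne (((Finset.mem_filter.mp he).2).symm.trans hd))
        _ (mul_one_mem hone e x) _ (hone g).1,
    σ.delta_r_mul (mul_one_mem hone _ x) (hone g).1, mul_assoc,
    one_mul_of_mem hone (mem_r (hone g).1)]

theorem sum_delta_mul_one_mul_embed (x y : R) :
    (∑ g : G, σ.δ g (x * one g)) * σ.embed one y = σ.tau one x y := by
  rw [embed, Finset.sum_mul_sum]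
  refine Finset.sum_congr rfl fun g _ => ?_
  rw [Finset.sum_eq_single_of_mem (𝔾.d g) (Finset.mem_filter.mpr ⟨Finset.mem_univ _, 𝔾.isId_d g⟩)
      fun e he hne => σ.mul_of_ne g e
        (fun hd => hne (hd.trans (AlgGroupoid.r_of_isId (Finset.mem_filter.mp he).2)).symm)
        _ (mul_one_mem hone g x) _ (mul_one_mem hone e y),
    σ.mul_of g (𝔾.d g) (𝔾.r_d g).symm _ (mul_one_mem hone g x) _ (mul_one_mem hone _ y), 𝔾.mul_d]
  have ha : α.act (𝔾.inv g) (x * one g) ∈ α.D (𝔾.d g) :=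
    mem_d_of_mem_inv (act_mem (mem_inv_inv (mul_one_mem hone g x)))
  rw [← (commute_one hone _ y).eq, ← mul_assoc, mul_one_of_mem hone ha,
    act_act_inv_mul hone (mul_one_mem hone g x), mul_assoc,
    one_mul_of_mem hone (act_mem (mul_one_mem hone _ y))]

theorem embed_mul_traceElement_mul_embed (x y : R) :
    σ.embed one x * σ.traceElement one * σ.embed one y = σ.tau one x y := by
  rw [σ.embed_mul_traceElement hone, σ.sum_delta_mul_one_mul_embed hone]

theorem delta_eq_sum_tau_of_galois
    (horth : ∀ e f, 𝔾.isId e → 𝔾.isId f → e ≠ f → ∀ x ∈ α.D e, ∀ y ∈ α.D f, x * y = 0)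
    {n : ℕ} {xs ys : Fin n → R}
    (hGal : ∀ g : G, ∑ i, xs i * α.act g (ys i * one (𝔾.inv g)) = if 𝔾.isId g then one g else 0)
    {h : G} {c : R} (hc : c ∈ α.D h) :
    σ.δ h c = ∑ i, σ.tau one (c * α.act h (xs i * one (𝔾.inv h))) (ys i) := by
  have hcoeff : ∀ g, ∑ i, c * α.act h (xs i * one (𝔾.inv h)) * α.act g (ys i * one (𝔾.inv g)) =
      if g = h then c else 0 := fun g => by
    simp only [mul_assoc, ← Finset.mul_sum, sum_act_mul_act_of_galois hone horth hGal,
      mul_ite, mul_zero, mul_one_of_mem hone hc]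
  rw [σ.sum_tau hone, Finset.sum_eq_single h (fun g _ hgh => by rw [hcoeff, if_neg hgh,
      σ.delta_zero]) (fun hh => absurd (Finset.mem_univ h) hh), hcoeff, if_pos rfl]

theorem isPartialGalois_of_one_eq_sum_tau {A : Type u} [Ring A] (σ : SkewRingRep 𝔾 α A)
    (h1A : (1 : A) = ∑ e ∈ Finset.univ.filter (fun e => 𝔾.isId e), σ.δ e (one e))
    {k : ℕ} {xs ys : Fin k → R} (h1 : (1 : A) = ∑ i, σ.tau one (xs i) (ys i)) :
    IsPartialGalois 𝔾 α one := by
  refine ⟨k, xs, ys, σ.eq_of_sum_delta_eq (fun g => ?_) (fun g => ?_) ?_⟩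
  · exact show _ ∈ (α.ideal g).toAddSubgroup from sum_mem fun i _ =>
      mul_mem_of_mem_right hone (act_mem (mul_one_mem hone _ _)) _
  · split_ifs
    exacts [(hone g).1, (α.ideal g).zero_mem]
  · rw [← σ.sum_tau hone, ← h1, h1A, Finset.sum_filter]
    refine Finset.sum_congr rfl fun g _ => ?_
    split_ifs
    exacts [rfl, (σ.delta_zero g).symm]

end SkewRingRep

theorem partial_galois_iff_RtR_iff_tau'_surj_general {G : Type u} [Fintype G]
    [DecidableEq G] (𝔾 : AlgGroupoid G) {R : Type u} [Ring R]
    (α : PartialGroupoidAction 𝔾 R (Set.univ : Set R))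
    (one : G → R) (hone : ∀ g, IsIdentityElem (one g) (α.D g))
    (horth : ∀ e f, 𝔾.isId e → 𝔾.isId f → e ≠ f → ∀ x ∈ α.D e, ∀ y ∈ α.D f, x * y = 0)
    {A : Type u} [Ring A] (σ : SkewRingRep 𝔾 α A)
    (h1A : (1 : A) = ∑ e ∈ Finset.univ.filter (fun e => 𝔾.isId e), σ.δ e (one e)) :
    let ε : R → A := fun x => ∑ e ∈ Finset.univ.filter (fun e => 𝔾.isId e), σ.δ e (x * one e)
    let tA : A := ∑ g : G, σ.δ g (one g)
    let RtR : AddSubgroup A := AddSubgroup.closure {a : A | ∃ x y : R, a = ε x * tA * ε y}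
    (IsPartialGalois 𝔾 α one ↔ RtR = ⊤) ∧
    ((RtR = ⊤) ↔
      ∀ a : A, ∃ (k : ℕ) (xs ys : Fin k → R),
        a = ∑ i, ∑ g : G, σ.δ g (xs i * α.act g (ys i * one (𝔾.inv g)))) := by
  intro ε tA RtR
  have hgen : ∀ x y, ε x * tA * ε y = σ.tau one x y := fun x y => by
    simp only [ε, tA]
    exact σ.embed_mul_traceElement_mul_embed hone x y
  have hmem : ∀ a, a ∈ RtR ↔ ∃ (k : ℕ) (xs ys : Fin k → R), a = ∑ i, σ.tau one (xs i) (ys i) :=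
    fun a => by
      simp only [RtR, hgen]
      exact AddSubgroup.mem_closure_iff_exists_fin_sum (σ.tau_neg_left hone)
  have hbc : RtR = ⊤ ↔ ∀ a : A, ∃ (k : ℕ) (xs ys : Fin k → R),
      a = ∑ i, ∑ g : G, σ.δ g (xs i * α.act g (ys i * one (𝔾.inv g))) := by
    simp only [AddSubgroup.eq_top_iff', hmem]
    rfl
  refine ⟨⟨fun ⟨n, xs, ys, hGal⟩ => ?_, fun htop => ?_⟩, hbc⟩
  · refine (AddSubgroup.eq_top_iff' RtR).2 fun a => ?_
    obtain ⟨s, c, hc, rfl⟩ := σ.spans a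
    exact sum_mem fun h _ =>
      (hmem _).2 ⟨n, _, ys, σ.delta_eq_sum_tau_of_galois hone horth hGal (hc h)⟩
  · obtain ⟨k, xs, ys, h1⟩ := hbc.1 htop 1
    exact σ.isPartialGalois_of_one_eq_sum_tau hone h1A h1

/-- **Theorem 5.3 (i) ⇔ (v) ⇔ (vi)**: under the standing hypotheses, the
following are equivalent: (a) `R` is an `α`-partial Galois extension of
`R^α`; (b) `R·t·R = R⋆_αG` where `t = ∑_{g ∈ G} 1_g δ_g` (and `R` embeds in
`A = R⋆_αG` via `ε : x ↦ ∑_{e ∈ G₀} (x 1_e) δ_e`); (c) the map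
`τ' : R ⊗_{R^α} R → R⋆_αG`, `τ'(x ⊗ y) = ∑_g x α_g(y 1_{g⁻¹}) δ_g`, is
surjective. -/
theorem partial_galois_iff_RtR_iff_tau'_surj {G : Type u} [Nonempty G] [Fintype G]
    [DecidableEq G] (𝔾 : AlgGroupoid G) {R : Type u} [Ring R]
    (α : PartialGroupoidAction 𝔾 R (Set.univ : Set R))
    (one : G → R) (hone : ∀ g, IsIdentityElem (one g) (α.D g))
    (hcentral : ∀ g (x : R), one g * x = x * one g)
    (horth : ∀ e f, 𝔾.isId e → 𝔾.isId f → e ≠ f → ∀ x ∈ α.D e, ∀ y ∈ α.D f, x * y = 0)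
    (hunit : (1 : R) = ∑ e ∈ Finset.univ.filter (fun e => 𝔾.isId e), one e)
    {A : Type u} [Ring A] (σ : SkewRingRep 𝔾 α A)
    (h1A : (1 : A) = ∑ e ∈ Finset.univ.filter (fun e => 𝔾.isId e), σ.δ e (one e)) :
    let ε : R → A := fun x => ∑ e ∈ Finset.univ.filter (fun e => 𝔾.isId e), σ.δ e (x * one e)
    let tA : A := ∑ g : G, σ.δ g (one g)
    let RtR : AddSubgroup A := AddSubgroup.closure {a : A | ∃ x y : R, a = ε x * tA * ε y}
    (IsPartialGalois 𝔾 α one ↔ RtR = ⊤) ∧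
    ((RtR = ⊤) ↔
      ∀ a : A, ∃ (k : ℕ) (xs ys : Fin k → R),
        a = ∑ i, ∑ g : G, σ.δ g (xs i * α.act g (ys i * one (𝔾.inv g)))) :=
  partial_galois_iff_RtR_iff_tau'_surj_general 𝔾 α one hone horth σ h1A
end

section
/- Under the standing hypotheses, R is an α-partial Galois extension of R^α if and only if R is a generator for the category of left R⋆_αG-modules (R being a left R⋆_αG-module via (Σ_g a_gδ_g)·x = Σ_g a_g·α_g(x·1_{g⁻¹})). -/
universe u

section GpdAux

variable {G : Type u} (𝔾 : AlgGroupoid G)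

private lemma gpd_isId_r (g : G) : 𝔾.isId (𝔾.r g) := 𝔾.d_r g

private lemma gpd_isId_d (g : G) : 𝔾.isId (𝔾.d g) := 𝔾.d_d g

private lemma gpd_id_r {e : G} (he : 𝔾.isId e) : 𝔾.r e = e := by
  conv_lhs => rw [← he]
  rw [𝔾.r_d]
  exact he

private lemma gpd_id_inv {e : G} (he : 𝔾.isId e) : 𝔾.inv e = e := by
  have h2 : 𝔾.d (𝔾.inv e) = e := by rw [𝔾.d_inv, gpd_id_r 𝔾 he]
  have h3 : 𝔾.mul (𝔾.inv e) e = e := by rw [𝔾.inv_mul]; exact he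
  calc 𝔾.inv e = 𝔾.mul (𝔾.inv e) (𝔾.d (𝔾.inv e)) := (𝔾.mul_d _).symm
    _ = 𝔾.mul (𝔾.inv e) e := by rw [h2]
    _ = e := h3

private lemma gpd_inv_mul_cancel {h g : G} (c : 𝔾.d h = 𝔾.r g) :
    𝔾.mul (𝔾.inv h) (𝔾.mul h g) = g := by
  rw [← 𝔾.mul_assoc' (𝔾.inv h) h g (𝔾.d_inv h) c, 𝔾.inv_mul, c, 𝔾.r_mul]

private lemma gpd_mul_inv_cancel {h k : G} (c : 𝔾.r k = 𝔾.r h) :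
    𝔾.mul h (𝔾.mul (𝔾.inv h) k) = k := by
  rw [← 𝔾.mul_assoc' h (𝔾.inv h) k (𝔾.r_inv h).symm (by rw [𝔾.d_inv, c]),
    𝔾.mul_inv, ← c, 𝔾.r_mul]

private lemma gpd_mul_inv_cancel' {g h : G} (c : 𝔾.d g = 𝔾.r h) :
    𝔾.mul (𝔾.mul g h) (𝔾.inv h) = g := by
  rw [𝔾.mul_assoc' g h (𝔾.inv h) c (𝔾.r_inv h).symm, 𝔾.mul_inv, ← c, 𝔾.mul_d]

private lemma gpd_inv_mul_rev {g h : G} (c : 𝔾.d g = 𝔾.r h) :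
    𝔾.inv (𝔾.mul g h) = 𝔾.mul (𝔾.inv h) (𝔾.inv g) := by
  have cm : 𝔾.d (𝔾.inv h) = 𝔾.r (𝔾.inv g) := by rw [𝔾.d_inv, 𝔾.r_inv, c]
  have hdm : 𝔾.d (𝔾.mul (𝔾.inv h) (𝔾.inv g)) = 𝔾.r (𝔾.mul g h) := by
    rw [𝔾.d_mul _ _ cm, 𝔾.d_inv, 𝔾.r_mul' g h c]
  have hmk : 𝔾.mul (𝔾.mul (𝔾.inv h) (𝔾.inv g)) (𝔾.mul g h) = 𝔾.d (𝔾.mul g h) := by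
    rw [𝔾.mul_assoc' (𝔾.inv h) (𝔾.inv g) (𝔾.mul g h) cm (by rw [𝔾.d_inv, 𝔾.r_mul' g h c]),
      gpd_inv_mul_cancel 𝔾 c, 𝔾.inv_mul, 𝔾.d_mul g h c]
  calc 𝔾.inv (𝔾.mul g h)
      = 𝔾.mul (𝔾.r (𝔾.inv (𝔾.mul g h))) (𝔾.inv (𝔾.mul g h)) := (𝔾.r_mul _).symm
    _ = 𝔾.mul (𝔾.mul (𝔾.mul (𝔾.inv h) (𝔾.inv g)) (𝔾.mul g h)) (𝔾.inv (𝔾.mul g h)) := by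
        rw [𝔾.r_inv, ← hmk]
    _ = 𝔾.mul (𝔾.mul (𝔾.inv h) (𝔾.inv g)) (𝔾.mul (𝔾.mul g h) (𝔾.inv (𝔾.mul g h))) :=
        𝔾.mul_assoc' _ _ _ hdm (𝔾.r_inv _).symm
    _ = 𝔾.mul (𝔾.mul (𝔾.inv h) (𝔾.inv g)) (𝔾.r (𝔾.mul g h)) := by rw [𝔾.mul_inv]
    _ = 𝔾.mul (𝔾.inv h) (𝔾.inv g) := by rw [← hdm, 𝔾.mul_d]

end GpdAux

section RingAux

variable {G : Type u} {𝔾 : AlgGroupoid G} {R : Type u} [Ring R]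
  {α : PartialGroupoidAction 𝔾 R (Set.univ : Set R)} {one : G → R}

private lemma mem_D_r {g : G} {x : R} (hx : x ∈ α.D g) : x ∈ α.D (𝔾.r g) :=
  (α.ideal g).subset hx

private lemma one_memD (hone : ∀ g, IsIdentityElem (one g) (α.D g)) (g : G) :
    one g ∈ α.D g := (hone g).1

private lemma absorb_r (hone : ∀ g, IsIdentityElem (one g) (α.D g)) {g : G} {x : R}
    (hx : x ∈ α.D g) : x * one g = x := ((hone g).2 x hx).2

private lemma absorb_l (hone : ∀ g, IsIdentityElem (one g) (α.D g)) {g : G} {x : R}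
    (hx : x ∈ α.D g) : one g * x = x := ((hone g).2 x hx).1

private lemma smul_one_memD (hone : ∀ g, IsIdentityElem (one g) (α.D g)) (g : G) (z : R) :
    z * one g ∈ α.D g := by
  have h1 : z * one g ∈ α.D (𝔾.r g) :=
    (α.ideal_r g).mul_mem_left (Set.mem_univ z) (mem_D_r (one_memD hone g))
  have h2 : (z * one g) * one g ∈ α.D g := (α.ideal g).mul_mem_left h1 (one_memD hone g)
  have h3 : z * one g = (z * one g) * one g := by
    rw [mul_assoc, absorb_r hone (one_memD hone g)]
  rw [h3]; exact h2

private lemma D_mul_mem (hone : ∀ g, IsIdentityElem (one g) (α.D g))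
    (hcentral : ∀ g (x : R), one g * x = x * one g) {g : G} {x : R}
    (hx : x ∈ α.D g) (z : R) : x * z ∈ α.D g := by
  have h1 : x * z = x * (z * one g) := by
    conv_lhs => rw [← absorb_r hone hx]
    rw [mul_assoc, hcentral g z]
  rw [h1]; exact (α.ideal g).mul_mem_left (mem_D_r hx) (smul_one_memD hone g z)

private lemma mul_D_mem (hone : ∀ g, IsIdentityElem (one g) (α.D g)) {g : G} {x : R}
    (hx : x ∈ α.D g) (z : R) : z * x ∈ α.D g := by
  have h1 : z * x = (z * one g) * x := by
    conv_lhs => rw [← absorb_l hone hx]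
    rw [← mul_assoc]
  rw [h1]; exact (α.ideal g).mul_mem_left (mem_D_r (smul_one_memD hone g z)) hx

private lemma act_memD {g : G} {x : R} (hx : x ∈ α.D (𝔾.inv g)) : α.act g x ∈ α.D g :=
  (α.bijOn g).mapsTo hx

private lemma act_memD' {g : G} {x : R} (hx : x ∈ α.D g) :
    α.act (𝔾.inv g) x ∈ α.D (𝔾.inv g) :=
  act_memD (by rw [𝔾.inv_inv]; exact hx)

private lemma act_act_inv (g : G) {x : R} (hx : x ∈ α.D g) :
    α.act g (α.act (𝔾.inv g) x) = x := by
  have h1 : x ∈ α.D (𝔾.inv (𝔾.inv g)) := by rw [𝔾.inv_inv]; exact hx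
  have h2 := α.comp_cond g (𝔾.inv g) (𝔾.r_inv g).symm x h1 (act_memD h1)
  rw [h2, 𝔾.mul_inv]
  exact α.act_id _ (gpd_isId_r 𝔾 g) x (mem_D_r hx)

private lemma act_inv_act (g : G) {x : R} (hx : x ∈ α.D (𝔾.inv g)) :
    α.act (𝔾.inv g) (α.act g x) = x := by
  have h2 := α.comp_cond (𝔾.inv g) g (𝔾.d_inv g) x hx
    (by rw [𝔾.inv_inv]; exact act_memD hx)
  rw [h2, 𝔾.inv_mul]
  refine α.act_id _ (gpd_isId_d 𝔾 g) x ?_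
  have := mem_D_r hx
  rwa [𝔾.r_inv] at this

private lemma act_zero (g : G) : α.act g 0 = 0 := by
  have h0 : (0 : R) ∈ α.D (𝔾.inv g) := (α.ideal _).zero_mem
  have := α.map_add g 0 h0 0 h0
  rw [add_zero] at this
  exact left_eq_add.mp this

private lemma act_one (hone : ∀ g, IsIdentityElem (one g) (α.D g)) (g : G) :
    α.act g (one (𝔾.inv g)) = one g := by
  have hu : α.act g (one (𝔾.inv g)) ∈ α.D g := act_memD (one_memD hone (𝔾.inv g))
  have hz : α.act (𝔾.inv g) (one g) ∈ α.D (𝔾.inv g) := act_memD' (one_memD hone g)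
  have key : α.act g (one (𝔾.inv g)) * one g = one g := by
    conv_lhs => rw [← act_act_inv g (one_memD hone g)]
    rw [← α.map_mul g _ (one_memD hone _) _ hz, absorb_l hone hz]
    exact act_act_inv g (one_memD hone g)
  exact (absorb_r hone hu).symm.trans key

private lemma act_inter_memD {g h : G} (c : 𝔾.d g = 𝔾.r h) {x : R}
    (h1 : x ∈ α.D (𝔾.inv g)) (h2 : x ∈ α.D h) : α.act g x ∈ α.D (𝔾.mul g h) := by
  have hx' : α.act (𝔾.inv h) x ∈ α.D (𝔾.inv h) := act_memD' h2
  have hcomp : α.act h (α.act (𝔾.inv h) x) = x := act_act_inv h h2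
  have hmem : α.act (𝔾.inv h) x ∈ α.D (𝔾.inv (𝔾.mul g h)) :=
    α.dom_cond g h c _ hx' (by rw [hcomp]; exact h1)
  have heq := α.comp_cond g h c _ hx' (by rw [hcomp]; exact h1)
  rw [hcomp] at heq
  rw [heq]
  exact act_memD hmem

private lemma act_inter_surj {g h : G} (c : 𝔾.d g = 𝔾.r h) {y : R}
    (h1 : y ∈ α.D g) (h2 : y ∈ α.D (𝔾.mul g h)) :
    ∃ z, z ∈ α.D (𝔾.inv g) ∧ z ∈ α.D h ∧ α.act g z = y := by
  have hy' : y ∈ α.D (𝔾.inv (𝔾.inv (𝔾.mul g h))) := by rw [𝔾.inv_inv]; exact h2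
  have hx1 : α.act (𝔾.inv (𝔾.mul g h)) y ∈ α.D (𝔾.inv (𝔾.mul g h)) := act_memD hy'
  have c1 : 𝔾.d (𝔾.inv g) = 𝔾.r (𝔾.mul g h) := by rw [𝔾.d_inv, 𝔾.r_mul' g h c]
  have hky : α.act (𝔾.mul g h) (α.act (𝔾.inv (𝔾.mul g h)) y) = y := act_act_inv _ h2
  have hmem : α.act (𝔾.inv (𝔾.mul g h)) y ∈ α.D (𝔾.inv (𝔾.mul (𝔾.inv g) (𝔾.mul g h))) :=
    α.dom_cond (𝔾.inv g) (𝔾.mul g h) c1 _ hx1 (by rw [hky, 𝔾.inv_inv]; exact h1)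
  rw [gpd_inv_mul_cancel 𝔾 c] at hmem
  have c2 : 𝔾.d h = 𝔾.r (𝔾.inv (𝔾.mul g h)) := by rw [𝔾.r_inv, 𝔾.d_mul g h c]
  have hz2 : α.act h (α.act (𝔾.inv (𝔾.mul g h)) y) ∈ α.D (𝔾.mul h (𝔾.inv (𝔾.mul g h))) :=
    act_inter_memD c2 hmem hx1
  have hmulk : 𝔾.mul h (𝔾.inv (𝔾.mul g h)) = 𝔾.inv g := by
    rw [gpd_inv_mul_rev 𝔾 c]
    exact gpd_mul_inv_cancel 𝔾 (by rw [𝔾.r_inv]; exact c)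
  rw [hmulk] at hz2
  refine ⟨α.act h (α.act (𝔾.inv (𝔾.mul g h)) y), hz2, act_memD hmem, ?_⟩
  rw [α.comp_cond g h c _ hmem hz2, hky]

private lemma act_one_one (hone : ∀ g, IsIdentityElem (one g) (α.D g))
    (hcentral : ∀ g (x : R), one g * x = x * one g) {g h : G} (c : 𝔾.d g = 𝔾.r h) :
    α.act g (one (𝔾.inv g) * one h) = one g * one (𝔾.mul g h) := by
  have m1 : one (𝔾.inv g) * one h ∈ α.D (𝔾.inv g) :=
    D_mul_mem hone hcentral (one_memD hone _) _
  have m2 : one (𝔾.inv g) * one h ∈ α.D h := mul_D_mem hone (one_memD hone h) _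
  have hu1 : α.act g (one (𝔾.inv g) * one h) ∈ α.D g := act_memD m1
  have hu2 : α.act g (one (𝔾.inv g) * one h) ∈ α.D (𝔾.mul g h) := act_inter_memD c m1 m2
  have ht1 : one g * one (𝔾.mul g h) ∈ α.D g := D_mul_mem hone hcentral (one_memD hone g) _
  have ht2 : one g * one (𝔾.mul g h) ∈ α.D (𝔾.mul g h) := mul_D_mem hone (one_memD hone _) _
  obtain ⟨z, hz1, hz2, hz3⟩ := act_inter_surj c ht1 ht2
  have e1 : α.act g (one (𝔾.inv g) * one h) * (one g * one (𝔾.mul g h)) =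
      α.act g (one (𝔾.inv g) * one h) := by
    rw [← mul_assoc, absorb_r hone hu1, absorb_r hone hu2]
  have e2 : α.act g (one (𝔾.inv g) * one h) * (one g * one (𝔾.mul g h)) =
      one g * one (𝔾.mul g h) := by
    rw [← hz3, ← α.map_mul g _ m1 _ hz1]
    congr 1
    rw [mul_assoc, absorb_l hone hz2, absorb_l hone hz1]
  exact e1.symm.trans e2

end RingAux

section DeltaAux

variable {G : Type u} {𝔾 : AlgGroupoid G} {R : Type u} [Ring R]
  {α : PartialGroupoidAction 𝔾 R (Set.univ : Set R)} {one : G → R}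
  {A : Type u} [Ring A] (σ : SkewRingRep 𝔾 α A)

private lemma delta_zero (g : G) : σ.δ g 0 = 0 := by
  have h0 : (0 : R) ∈ α.D g := (α.ideal g).zero_mem
  have := σ.map_add g 0 h0 0 h0
  rw [add_zero] at this
  exact left_eq_add.mp this

private lemma delta_neg (g : G) {x : R} (hx : x ∈ α.D g) : σ.δ g (-x) = -σ.δ g x := by
  have := σ.map_add g x hx (-x) ((α.ideal g).neg_mem hx)
  rw [add_neg_cancel, delta_zero] at this
  exact eq_neg_of_add_eq_zero_right this.symm

private lemma delta_sub (g : G) {x y : R} (hx : x ∈ α.D g) (hy : y ∈ α.D g) :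
    σ.δ g (x - y) = σ.δ g x - σ.δ g y := by
  rw [sub_eq_add_neg, σ.map_add g x hx (-y) ((α.ideal g).neg_mem hy), delta_neg σ g hy,
    sub_eq_add_neg]

private lemma D_sum_mem {ι : Type} (g : G) (s : Finset ι) (v : ι → R)
    (hv : ∀ i ∈ s, v i ∈ α.D g) : (∑ i ∈ s, v i) ∈ α.D g := by
  classical
  induction s using Finset.cons_induction with
  | empty => simpa using (α.ideal g).zero_mem
  | cons a s ha ih =>
    rw [Finset.sum_cons]
    exact (α.ideal g).add_mem (hv a (Finset.mem_cons_self a s))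
      (ih fun i hi => hv i (Finset.mem_cons_of_mem hi))

private lemma delta_sum {ι : Type} (g : G) (s : Finset ι) (v : ι → R)
    (hv : ∀ i ∈ s, v i ∈ α.D g) :
    σ.δ g (∑ i ∈ s, v i) = ∑ i ∈ s, σ.δ g (v i) := by
  classical
  induction s using Finset.cons_induction with
  | empty => simpa using delta_zero σ g
  | cons a s ha ih =>
    rw [Finset.sum_cons, Finset.sum_cons,
      σ.map_add g _ (hv a (Finset.mem_cons_self a s))
        _ (D_sum_mem g s v fun i hi => hv i (Finset.mem_cons_of_mem hi)),
      ih fun i hi => hv i (Finset.mem_cons_of_mem hi)]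

private lemma delta_uniq [Fintype G] (c c' : G → R) (hc : ∀ g, c g ∈ α.D g)
    (hc' : ∀ g, c' g ∈ α.D g)
    (heq : ∑ g : G, σ.δ g (c g) = ∑ g : G, σ.δ g (c' g)) : ∀ g, c g = c' g := by
  intro g
  have hsub : ∀ g, c g - c' g ∈ α.D g := fun g => by
    rw [sub_eq_add_neg]
    exact (α.ideal g).add_mem (hc g) ((α.ideal g).neg_mem (hc' g))
  have h0 : ∑ g : G, σ.δ g (c g - c' g) = 0 := by
    calc ∑ g : G, σ.δ g (c g - c' g) = ∑ g : G, (σ.δ g (c g) - σ.δ g (c' g)) :=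
          Finset.sum_congr rfl fun g _ => delta_sub σ g (hc g) (hc' g)
      _ = 0 := by rw [Finset.sum_sub_distrib, heq, sub_self]
  exact sub_eq_zero.mp (σ.indep Finset.univ _ hsub h0 g (Finset.mem_univ g))

private lemma expand_mul [Fintype G] [DecidableEq G] (h : G) (b : R) (hb : b ∈ α.D h)
    (c : G → R) (hc : ∀ g, c g ∈ α.D g) :
    σ.δ h b * (∑ g : G, σ.δ g (c g)) =
      ∑ k : G, (if 𝔾.r k = 𝔾.r h then
        σ.δ k (α.act h (α.act (𝔾.inv h) b * c (𝔾.mul (𝔾.inv h) k))) else 0) := by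
  rw [Finset.mul_sum]
  have step1 : ∀ g : G, σ.δ h b * σ.δ g (c g) =
      if 𝔾.d h = 𝔾.r g then σ.δ (𝔾.mul h g) (α.act h (α.act (𝔾.inv h) b * c g)) else 0 := by
    intro g
    by_cases hcomp : 𝔾.d h = 𝔾.r g
    · rw [if_pos hcomp, σ.mul_of h g hcomp b hb (c g) (hc g)]
    · rw [if_neg hcomp, σ.mul_of_ne h g hcomp b hb (c g) (hc g)]
  rw [Finset.sum_congr rfl fun g _ => step1 g, ← Finset.sum_filter, ← Finset.sum_filter]
  refine Finset.sum_nbij' (fun g => 𝔾.mul h g) (fun k => 𝔾.mul (𝔾.inv h) k) ?_ ?_ ?_ ?_ ?_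
  · intro g hg
    simp only [Finset.mem_filter, Finset.mem_univ, true_and] at hg ⊢
    exact 𝔾.r_mul' h g hg
  · intro k hk
    simp only [Finset.mem_filter, Finset.mem_univ, true_and] at hk ⊢
    have := 𝔾.r_mul' (𝔾.inv h) k (by rw [𝔾.d_inv]; exact hk.symm)
    rw [𝔾.r_inv] at this
    exact this.symm
  · intro g hg
    simp only [Finset.mem_filter, Finset.mem_univ, true_and] at hg
    exact gpd_inv_mul_cancel 𝔾 hg
  · intro k hk
    simp only [Finset.mem_filter, Finset.mem_univ, true_and] at hk
    exact gpd_mul_inv_cancel 𝔾 hk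
  · intro g hg
    simp only [Finset.mem_filter, Finset.mem_univ, true_and] at hg
    rw [gpd_inv_mul_cancel 𝔾 hg]

end DeltaAux

section BigAux

variable {G : Type u} {𝔾 : AlgGroupoid G} {R : Type u} [Ring R]
  {α : PartialGroupoidAction 𝔾 R (Set.univ : Set R)} {one : G → R}

private lemma big_identity (hone : ∀ g, IsIdentityElem (one g) (α.D g))
    (hcentral : ∀ g (x : R), one g * x = x * one g) {h g : G} (c : 𝔾.d h = 𝔾.r g)
    {b : R} (hb : b ∈ α.D h) (z y : R) :
    b * α.act h (z * one (𝔾.inv h)) * α.act (𝔾.mul h g) (y * one (𝔾.inv (𝔾.mul h g))) =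
      α.act h (α.act (𝔾.inv h) b * (z * α.act g (y * one (𝔾.inv g)))) := by
  have hp : z * one (𝔾.inv h) ∈ α.D (𝔾.inv h) := smul_one_memD hone _ z
  have hq : y * one (𝔾.inv g) ∈ α.D (𝔾.inv g) := smul_one_memD hone _ y
  have hw : α.act g (y * one (𝔾.inv g)) ∈ α.D g := act_memD hq
  have hb' : α.act (𝔾.inv h) b ∈ α.D (𝔾.inv h) := act_memD' hb
  have hu_h : α.act g (y * one (𝔾.inv g)) * one (𝔾.inv h) ∈ α.D (𝔾.inv h) :=
    smul_one_memD hone _ _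
  have hu_g : α.act g (y * one (𝔾.inv g)) * one (𝔾.inv h) ∈ α.D g :=
    D_mul_mem hone hcentral hw _
  have step1 : α.act (𝔾.inv h) b * (z * α.act g (y * one (𝔾.inv g))) =
      α.act (𝔾.inv h) b *
        ((z * one (𝔾.inv h)) * (α.act g (y * one (𝔾.inv g)) * one (𝔾.inv h))) := by
    conv_lhs => rw [← absorb_r hone hb']
    rw [mul_assoc, hcentral (𝔾.inv h) (z * α.act g (y * one (𝔾.inv g))), mul_assoc z,
      ← absorb_l hone hu_h, ← mul_assoc z, absorb_l hone hu_h]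
  rw [step1,
    α.map_mul h (α.act (𝔾.inv h) b) hb' _ (D_mul_mem hone hcentral hp _),
    act_act_inv h hb,
    α.map_mul h (z * one (𝔾.inv h)) hp _ hu_h]
  have hvg : α.act (𝔾.inv g) (α.act g (y * one (𝔾.inv g)) * one (𝔾.inv h)) ∈ α.D (𝔾.inv g) :=
    act_memD' hu_g
  have hgu : α.act g (α.act (𝔾.inv g) (α.act g (y * one (𝔾.inv g)) * one (𝔾.inv h))) =
      α.act g (y * one (𝔾.inv g)) * one (𝔾.inv h) := act_act_inv g hu_g
  have step3 : α.act h (α.act g (y * one (𝔾.inv g)) * one (𝔾.inv h)) =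
      α.act (𝔾.mul h g) (α.act (𝔾.inv g) (α.act g (y * one (𝔾.inv g)) * one (𝔾.inv h))) := by
    conv_lhs => rw [← hgu]
    exact α.comp_cond h g c _ hvg (by rw [hgu]; exact hu_h)
  have step4 : α.act (𝔾.inv g) (α.act g (y * one (𝔾.inv g)) * one (𝔾.inv h)) =
      (y * one (𝔾.inv g)) * (one (𝔾.inv g) * one (𝔾.inv (𝔾.mul h g))) := by
    have hrw : α.act g (y * one (𝔾.inv g)) * one (𝔾.inv h) =
        α.act g (y * one (𝔾.inv g)) * (one g * one (𝔾.inv h)) := by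
      conv_lhs => rw [← absorb_r hone hw]
      rw [mul_assoc]
    have c' : 𝔾.d (𝔾.inv g) = 𝔾.r (𝔾.inv h) := by rw [𝔾.d_inv, 𝔾.r_inv]; exact c.symm
    have haoo := act_one_one hone hcentral c'
    rw [𝔾.inv_inv, ← gpd_inv_mul_rev 𝔾 c] at haoo
    rw [hrw, α.map_mul (𝔾.inv g) _ (by rw [𝔾.inv_inv]; exact hw)
      _ (by rw [𝔾.inv_inv]; exact D_mul_mem hone hcentral (one_memD hone g) _),
      act_inv_act g hq, haoo]
  have step5 : (y * one (𝔾.inv g)) * (one (𝔾.inv g) * one (𝔾.inv (𝔾.mul h g))) =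
      (y * one (𝔾.inv (𝔾.mul h g))) * (one (𝔾.inv (𝔾.mul h g)) * one (𝔾.inv g)) := by
    have e1 : ∀ (u v : G), (y * one u) * (one u * one v) = y * (one u * one v) := by
      intro u v
      rw [mul_assoc y, ← mul_assoc (one u) (one u), absorb_r hone (one_memD hone u)]
    rw [e1, e1, hcentral (𝔾.inv (𝔾.mul h g)) (one (𝔾.inv g))]
  have step6 : α.act (𝔾.mul h g)
        ((y * one (𝔾.inv (𝔾.mul h g))) * (one (𝔾.inv (𝔾.mul h g)) * one (𝔾.inv g))) =
      α.act (𝔾.mul h g) (y * one (𝔾.inv (𝔾.mul h g))) * (one (𝔾.mul h g) * one h) := by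
    have c'' : 𝔾.d (𝔾.mul h g) = 𝔾.r (𝔾.inv g) := by rw [𝔾.d_mul h g c, 𝔾.r_inv]
    have haoo := act_one_one hone hcentral c''
    rw [gpd_mul_inv_cancel' 𝔾 c] at haoo
    rw [α.map_mul (𝔾.mul h g) _ (smul_one_memD hone _ y)
      _ (D_mul_mem hone hcentral (one_memD hone _) _), haoo]
  rw [step3, step4, step5, step6]
  have hP : α.act h (z * one (𝔾.inv h)) ∈ α.D h := act_memD hp
  have hQ : α.act (𝔾.mul h g) (y * one (𝔾.inv (𝔾.mul h g))) ∈ α.D (𝔾.mul h g) :=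
    act_memD (smul_one_memD hone _ y)
  have e7 : α.act (𝔾.mul h g) (y * one (𝔾.inv (𝔾.mul h g))) * (one (𝔾.mul h g) * one h) =
      one h * α.act (𝔾.mul h g) (y * one (𝔾.inv (𝔾.mul h g))) := by
    rw [← mul_assoc, absorb_r hone hQ, ← hcentral h _]
  rw [e7, ← mul_assoc (α.act h (z * one (𝔾.inv h))), absorb_r hone hP, mul_assoc]

end BigAux

set_option linter.unusedSectionVars false

section MainAux

variable {G : Type u} [Fintype G] [DecidableEq G] {𝔾 : AlgGroupoid G} {R : Type u} [Ring R]
  {α : PartialGroupoidAction 𝔾 R (Set.univ : Set R)}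
  {A : Type u} [Ring A]

private def Fmap (σ : SkewRingRep 𝔾 α A) (one : G → R) (y x : R) : A :=
  ∑ g : G, σ.δ g (x * α.act g (y * one (𝔾.inv g)))

variable {one : G → R} (σ : SkewRingRep 𝔾 α A)

private lemma Fmap_coeff_mem (hone : ∀ g, IsIdentityElem (one g) (α.D g)) (y : R) (g : G)
    (x : R) : x * α.act g (y * one (𝔾.inv g)) ∈ α.D g :=
  mul_D_mem hone (act_memD (smul_one_memD hone (𝔾.inv g) y)) x

private lemma Fmap_add (hone : ∀ g, IsIdentityElem (one g) (α.D g)) (y u v : R) :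
    Fmap σ one y (u + v) = Fmap σ one y u + Fmap σ one y v := by
  unfold Fmap
  rw [← Finset.sum_add_distrib]
  refine Finset.sum_congr rfl fun g _ => ?_
  rw [add_mul]
  exact σ.map_add g _ (Fmap_coeff_mem hone y g u) _ (Fmap_coeff_mem hone y g v)

private lemma Fmap_core (hone : ∀ g, IsIdentityElem (one g) (α.D g))
    (hcentral : ∀ g (x : R), one g * x = x * one g)
    (horth : ∀ e f, 𝔾.isId e → 𝔾.isId f → e ≠ f → ∀ x ∈ α.D e, ∀ y ∈ α.D f, x * y = 0)
    (y : R) (h : G) {b : R} (hb : b ∈ α.D h) (z : R) :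
    Fmap σ one y (b * α.act h (z * one (𝔾.inv h))) = σ.δ h b * Fmap σ one y z := by
  unfold Fmap
  rw [expand_mul σ h b hb _ (fun g => Fmap_coeff_mem hone y g z)]
  refine Finset.sum_congr rfl fun k _ => ?_
  by_cases hrk : 𝔾.r k = 𝔾.r h
  · rw [if_pos hrk]
    have hcomp : 𝔾.d h = 𝔾.r (𝔾.mul (𝔾.inv h) k) := by
      have := 𝔾.r_mul' (𝔾.inv h) k (by rw [𝔾.d_inv]; exact hrk.symm)
      rw [𝔾.r_inv] at this
      exact this.symm
    have hbig := big_identity hone hcentral hcomp hb z y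
    rw [gpd_mul_inv_cancel 𝔾 hrk] at hbig
    rw [hbig]
  · rw [if_neg hrk]
    have hX : b * α.act h (z * one (𝔾.inv h)) * α.act k (y * one (𝔾.inv k)) = 0 :=
      horth (𝔾.r h) (𝔾.r k) (gpd_isId_r 𝔾 h) (gpd_isId_r 𝔾 k) (fun he => hrk he.symm)
        _ (mem_D_r (D_mul_mem hone hcentral hb _))
        _ (mem_D_r (act_memD (smul_one_memD hone (𝔾.inv k) y)))
    rw [hX, delta_zero]

end MainAux

section FlinAux
set_option linter.unusedSectionVars false

variable {G : Type u} [Fintype G] [DecidableEq G] {𝔾 : AlgGroupoid G} {R : Type u} [Ring R]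
  {α : PartialGroupoidAction 𝔾 R (Set.univ : Set R)} {one : G → R}
  {A : Type u} [Ring A]

private def Flin (σ : SkewRingRep 𝔾 α A) [Module A R]
    (hone : ∀ g, IsIdentityElem (one g) (α.D g))
    (hcentral : ∀ g (x : R), one g * x = x * one g)
    (horth : ∀ e f, 𝔾.isId e → 𝔾.isId f → e ≠ f → ∀ x ∈ α.D e, ∀ y ∈ α.D f, x * y = 0)
    (hAR : ∀ g, ∀ a ∈ α.D g, ∀ x : R, σ.δ g a • x = a * α.act g (x * one (𝔾.inv g)))
    (y : R) : R →ₗ[A] A where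
  toFun := Fmap σ one y
  map_add' := Fmap_add σ hone y
  map_smul' := fun a x => by
    obtain ⟨s, cc, hcc, hs⟩ := σ.spans a
    simp only [RingHom.id_apply, smul_eq_mul]
    rw [hs, Finset.sum_smul, Finset.sum_mul]
    rw [show Fmap σ one y (∑ g ∈ s, σ.δ g (cc g) • x) =
        ∑ g ∈ s, Fmap σ one y (σ.δ g (cc g) • x) from
      map_sum (AddMonoidHom.mk' (Fmap σ one y) (Fmap_add σ hone y)) _ s]
    refine Finset.sum_congr rfl fun g _ => ?_
    rw [hAR g (cc g) (hcc g) x]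
    exact Fmap_core σ hone hcentral horth y g (hcc g) x

private lemma Flin_apply (σ : SkewRingRep 𝔾 α A) [Module A R]
    (hone : ∀ g, IsIdentityElem (one g) (α.D g))
    (hcentral : ∀ g (x : R), one g * x = x * one g)
    (horth : ∀ e f, 𝔾.isId e → 𝔾.isId f → e ≠ f → ∀ x ∈ α.D e, ∀ y ∈ α.D f, x * y = 0)
    (hAR : ∀ g, ∀ a ∈ α.D g, ∀ x : R, σ.δ g a • x = a * α.act g (x * one (𝔾.inv g)))
    (y x : R) : Flin σ hone hcentral horth hAR y x = Fmap σ one y x := rfl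

end FlinAux
/-- **Theorem 5.3 (i) ⇔ (vii)**: under the standing hypotheses, `R` is an
`α`-partial Galois extension of `R^α` if and only if `R` is a generator for
the category of left `R⋆_αG`-modules (equivalently, the trace ideal
`∑_{f ∈ Hom_A(R,A)} f(R)` equals `A = R⋆_αG`), where `R` is a left
`A`-module via `(∑ a_g δ_g) • x = ∑ a_g α_g(x 1_{g⁻¹})`. -/
theorem partial_galois_iff_generator {G : Type u} [Nonempty G] [Fintype G]
    [DecidableEq G] (𝔾 : AlgGroupoid G) {R : Type u} [Ring R]
    (α : PartialGroupoidAction 𝔾 R (Set.univ : Set R))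
    (one : G → R) (hone : ∀ g, IsIdentityElem (one g) (α.D g))
    (hcentral : ∀ g (x : R), one g * x = x * one g)
    (horth : ∀ e f, 𝔾.isId e → 𝔾.isId f → e ≠ f → ∀ x ∈ α.D e, ∀ y ∈ α.D f, x * y = 0)
    (hunit : (1 : R) = ∑ e ∈ Finset.univ.filter (fun e => 𝔾.isId e), one e)
    {A : Type u} [Ring A] (σ : SkewRingRep 𝔾 α A)
    (h1A : (1 : A) = ∑ e ∈ Finset.univ.filter (fun e => 𝔾.isId e), σ.δ e (one e))
    [Module A R]
    (hAR : ∀ g, ∀ a ∈ α.D g, ∀ x : R, σ.δ g a • x = a * α.act g (x * one (𝔾.inv g))) :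
    IsPartialGalois 𝔾 α one ↔
      AddSubgroup.closure {b : A | ∃ (f : R →ₗ[A] A) (x : R), b = f x} = ⊤ := by
  constructor
  · -- Galois ⟹ generator
    intro hgal'
    obtain ⟨n, xs, ys, hgal⟩ := hgal'
    have key1 : ∑ i, Fmap σ one (ys i) (xs i) = 1 := by
      show (∑ i : Fin n, ∑ g : G, σ.δ g (xs i * α.act g (ys i * one (𝔾.inv g)))) = 1
      rw [Finset.sum_comm]
      have h2 : ∀ g : G, (∑ i : Fin n, σ.δ g (xs i * α.act g (ys i * one (𝔾.inv g)))) =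
          σ.δ g (if 𝔾.isId g then one g else 0) := fun g => by
        rw [← delta_sum σ g Finset.univ _ (fun i _ => Fmap_coeff_mem hone (ys i) g (xs i)),
          hgal g]
      rw [Finset.sum_congr rfl fun g _ => h2 g, h1A, Finset.sum_filter]
      refine Finset.sum_congr rfl fun g _ => ?_
      by_cases hg : 𝔾.isId g
      · rw [if_pos hg, if_pos hg]
      · rw [if_neg hg, if_neg hg, delta_zero]
    rw [AddSubgroup.eq_top_iff']
    intro a
    have hsum : ∑ i, (Flin σ hone hcentral horth hAR (ys i)) (a • xs i) = a := by
      have h3 : ∀ i : Fin n, (Flin σ hone hcentral horth hAR (ys i)) (a • xs i) =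
          a * Fmap σ one (ys i) (xs i) := fun i => by
        rw [map_smul, smul_eq_mul, Flin_apply]
      rw [Finset.sum_congr rfl fun i _ => h3 i, ← Finset.mul_sum, key1, mul_one]
    rw [← hsum]
    exact AddSubgroup.sum_mem _ fun i _ =>
      AddSubgroup.subset_closure ⟨Flin σ hone hcentral horth hAR (ys i), a • xs i, rfl⟩
  · -- generator ⟹ Galois
    intro htop
    have master : ∀ f : R →ₗ[A] A, ∃ t : R, ∀ x : R,
        f x = ∑ g : G, σ.δ g (x * α.act g (t * one (𝔾.inv g))) := by
      intro f
      obtain ⟨s, c0, hc0, hs⟩ := σ.spans (f 1)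
      have hγex : ∃ γ : G → R, (∀ g, γ g ∈ α.D g) ∧ f 1 = ∑ g : G, σ.δ g (γ g) := by
        refine ⟨fun g => if g ∈ s then c0 g else 0, fun g => ?_, ?_⟩
        · dsimp only; split
          · exact hc0 g
          · exact (α.ideal g).zero_mem
        · have hsw : (∑ g : G, σ.δ g (if g ∈ s then c0 g else 0)) =
              ∑ g : G, (if g ∈ s then σ.δ g (c0 g) else 0) := by
            refine Finset.sum_congr rfl fun g _ => ?_
            split
            · rfl
            · exact delta_zero σ g
          rw [hs, hsw, Finset.sum_ite_mem, Finset.univ_inter]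
      obtain ⟨γ, hγ, hexp⟩ := hγex
      have hscal : ∀ (z : R) (e : G), 𝔾.isId e → σ.δ e (z * one e) • (1 : R) = z * one e := by
        intro z e he
        rw [hAR e _ (smul_one_memD hone e z) 1, gpd_id_inv 𝔾 he, one_mul,
          α.act_id e he _ (one_memD hone e), mul_assoc,
          absorb_r hone (one_memD hone e)]
      have hz1 : ∀ z : R,
          (∑ e ∈ Finset.univ.filter (fun e => 𝔾.isId e), σ.δ e (z * one e)) • (1 : R) = z := by
        intro z
        rw [Finset.sum_smul,
          Finset.sum_congr rfl fun e he => hscal z e (Finset.mem_filter.mp he).2,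
          ← Finset.mul_sum, ← hunit, mul_one]
      have hfz : ∀ z : R, f z =
          ∑ e ∈ Finset.univ.filter (fun e => 𝔾.isId e), σ.δ e (z * one e) * f 1 := by
        intro z
        conv_lhs => rw [← hz1 z]
        rw [map_smul, smul_eq_mul, Finset.sum_mul]
      have hper : ∀ (z : R) (e : G), 𝔾.isId e →
          σ.δ e (z * one e) * (∑ g : G, σ.δ g (γ g)) =
            ∑ k : G, (if 𝔾.r k = e then σ.δ k ((z * one e) * γ k) else 0) := by
        intro z e he
        rw [expand_mul σ e (z * one e) (smul_one_memD hone e z) γ hγ]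
        refine Finset.sum_congr rfl fun k _ => ?_
        rw [gpd_id_r 𝔾 he]
        by_cases hrk : 𝔾.r k = e
        · rw [if_pos hrk, if_pos hrk]
          have hmulek : 𝔾.mul e k = k := by
            conv_lhs => rw [← hrk]
            exact 𝔾.r_mul k
          congr 1
          rw [gpd_id_inv 𝔾 he, α.act_id e he _ (smul_one_memD hone e z), hmulek]
          exact α.act_id e he _ (D_mul_mem hone hcentral (smul_one_memD hone e z) (γ k))
        · rw [if_neg hrk, if_neg hrk]
      have hcoefffz : ∀ z : R, f z = ∑ k : G, σ.δ k (z * γ k) := by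
        intro z
        rw [hfz z, hexp,
          Finset.sum_congr rfl fun e he => hper z e (Finset.mem_filter.mp he).2,
          Finset.sum_comm]
        refine Finset.sum_congr rfl fun k _ => ?_
        rw [Finset.sum_ite_eq,
          if_pos (Finset.mem_filter.mpr ⟨Finset.mem_univ _, gpd_isId_r 𝔾 k⟩)]
        congr 1
        rw [mul_assoc, absorb_l hone (mem_D_r (hγ k))]
      have hkey : ∀ h : G, α.act h (γ (𝔾.inv h)) = one h * γ (𝔾.r h) := by
        intro h
        have hδh1 : σ.δ h (one h) • (1 : R) = one h := by
          rw [hAR h _ (one_memD hone h) 1, one_mul, act_one hone h,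
            absorb_r hone (one_memD hone h)]
        have way2 : f (one h) = ∑ k : G, σ.δ k (if 𝔾.r k = 𝔾.r h then
            α.act h (α.act (𝔾.inv h) (one h) * γ (𝔾.mul (𝔾.inv h) k)) else 0) := by
          conv_lhs => rw [← hδh1]
          rw [map_smul, smul_eq_mul, hexp, expand_mul σ h (one h) (one_memD hone h) γ hγ]
          refine Finset.sum_congr rfl fun k _ => ?_
          by_cases hrk : 𝔾.r k = 𝔾.r h
          · rw [if_pos hrk, if_pos hrk]
          · rw [if_neg hrk, if_neg hrk, delta_zero]
        have way1 : f (one h) = ∑ k : G, σ.δ k (one h * γ k) := hcoefffz (one h)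
        have mem2 : ∀ k, (if 𝔾.r k = 𝔾.r h then
            α.act h (α.act (𝔾.inv h) (one h) * γ (𝔾.mul (𝔾.inv h) k)) else 0) ∈ α.D k := by
          intro k
          split
          next hrk =>
            have hcomp : 𝔾.d h = 𝔾.r (𝔾.mul (𝔾.inv h) k) := by
              have := 𝔾.r_mul' (𝔾.inv h) k (by rw [𝔾.d_inv]; exact hrk.symm)
              rw [𝔾.r_inv] at this
              exact this.symm
            have h1 : α.act (𝔾.inv h) (one h) * γ (𝔾.mul (𝔾.inv h) k) ∈ α.D (𝔾.inv h) :=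
              D_mul_mem hone hcentral (act_memD' (one_memD hone h)) _
            have h2 : α.act (𝔾.inv h) (one h) * γ (𝔾.mul (𝔾.inv h) k) ∈
                α.D (𝔾.mul (𝔾.inv h) k) := mul_D_mem hone (hγ _) _
            have h3 := act_inter_memD hcomp h1 h2
            rwa [gpd_mul_inv_cancel 𝔾 hrk] at h3
          next => exact (α.ideal k).zero_mem
        have mem1 : ∀ k, one h * γ k ∈ α.D k := fun k => mul_D_mem hone (hγ k) _
        have huq := delta_uniq σ _ _ mem1 mem2 (way1.symm.trans way2) (𝔾.r h)
        have hm1 : 𝔾.mul (𝔾.inv h) (𝔾.r h) = 𝔾.inv h := by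
          conv_lhs => rw [← 𝔾.d_inv h]
          exact 𝔾.mul_d _
        have hm2 : α.act (𝔾.inv h) (one h) = one (𝔾.inv h) := by
          have := act_one hone (𝔾.inv h)
          rwa [𝔾.inv_inv] at this
        rw [if_pos (𝔾.r_r h), hm1, hm2, absorb_l hone (hγ (𝔾.inv h))] at huq
        exact huq.symm
      refine ⟨∑ e ∈ Finset.univ.filter (fun e => 𝔾.isId e), γ e, fun x => ?_⟩
      rw [hcoefffz x]
      refine Finset.sum_congr rfl fun g _ => ?_
      have h1 := hkey (𝔾.inv g)
      rw [𝔾.inv_inv, 𝔾.r_inv] at h1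
      have hmem1g : one (𝔾.inv g) ∈ α.D (𝔾.d g) := by
        have := mem_D_r (one_memD hone (𝔾.inv g))
        rwa [𝔾.r_inv] at this
      have h2 : one (𝔾.inv g) * (∑ e ∈ Finset.univ.filter (fun e => 𝔾.isId e), γ e) =
          one (𝔾.inv g) * γ (𝔾.d g) := by
        rw [Finset.mul_sum]
        refine Finset.sum_eq_single (𝔾.d g) (fun e he hne => ?_)
          (fun hd => absurd (Finset.mem_filter.mpr ⟨Finset.mem_univ _, gpd_isId_d 𝔾 g⟩) hd)
        exact horth (𝔾.d g) e (gpd_isId_d 𝔾 g) (Finset.mem_filter.mp he).2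
          (fun hh => hne hh.symm) _ hmem1g _ (hγ e)
      have h3 : α.act g ((∑ e ∈ Finset.univ.filter (fun e => 𝔾.isId e), γ e) *
          one (𝔾.inv g)) = γ g := by
        rw [← hcentral (𝔾.inv g) (∑ e ∈ Finset.univ.filter (fun e => 𝔾.isId e), γ e), h2,
          ← h1]
        exact act_act_inv g (hγ g)
      rw [h3]
    have h1mem : (1 : A) ∈
        AddSubgroup.closure {b : A | ∃ (f : R →ₗ[A] A) (x : R), b = f x} := by
      rw [htop]; trivial
    have main : ∃ (n : ℕ) (xs ts : Fin n → R), (1 : A) =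
        ∑ g : G, σ.δ g (∑ i, xs i * α.act g (ts i * one (𝔾.inv g))) := by
      refine AddSubgroup.closure_induction
        (p := fun a _ => ∃ (n : ℕ) (xs ts : Fin n → R), a =
          ∑ g : G, σ.δ g (∑ i, xs i * α.act g (ts i * one (𝔾.inv g)))) ?_ ?_ ?_ ?_ h1mem
      · rintro b ⟨f, x, rfl⟩
        obtain ⟨t, ht⟩ := master f
        refine ⟨1, fun _ => x, fun _ => t, (ht x).trans (Finset.sum_congr rfl fun g _ => ?_)⟩
        congr 1
        simp
      · exact ⟨0, Fin.elim0, Fin.elim0, by simp [delta_zero σ]⟩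
      · rintro a b _ _ ⟨n, xs, ts, ha⟩ ⟨m, xs', ts', hb⟩
        refine ⟨n + m, Fin.append xs xs', Fin.append ts ts', ?_⟩
        rw [ha, hb, ← Finset.sum_add_distrib]
        refine Finset.sum_congr rfl fun g _ => ?_
        have m1 : (∑ i : Fin n, xs i * α.act g (ts i * one (𝔾.inv g))) ∈ α.D g :=
          D_sum_mem g _ _ fun i _ => Fmap_coeff_mem hone (ts i) g (xs i)
        have m2 : (∑ i : Fin m, xs' i * α.act g (ts' i * one (𝔾.inv g))) ∈ α.D g :=
          D_sum_mem g _ _ fun i _ => Fmap_coeff_mem hone (ts' i) g (xs' i)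
        rw [← σ.map_add g _ m1 _ m2]
        congr 1
        rw [Fin.sum_univ_add]
        congr 1
        · exact Finset.sum_congr rfl fun i _ => by rw [Fin.append_left, Fin.append_left]
        · exact Finset.sum_congr rfl fun i _ => by rw [Fin.append_right, Fin.append_right]
      · rintro a _ ⟨n, xs, ts, ha⟩
        refine ⟨n, fun i => -xs i, ts, ?_⟩
        rw [ha, ← Finset.sum_neg_distrib]
        refine Finset.sum_congr rfl fun g _ => ?_
        have mS : (∑ i : Fin n, xs i * α.act g (ts i * one (𝔾.inv g))) ∈ α.D g :=
          D_sum_mem g _ _ fun i _ => Fmap_coeff_mem hone (ts i) g (xs i)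
        have hS : (∑ i : Fin n, -xs i * α.act g (ts i * one (𝔾.inv g))) =
            -(∑ i : Fin n, xs i * α.act g (ts i * one (𝔾.inv g))) := by
          rw [← Finset.sum_neg_distrib]
          exact Finset.sum_congr rfl fun i _ => neg_mul _ _
        rw [hS, delta_neg σ g mS]
    obtain ⟨n, xs, ts, h1eq⟩ := main
    have h1A' : (1 : A) = ∑ g : G, σ.δ g (if 𝔾.isId g then one g else 0) := by
      rw [h1A, Finset.sum_filter]
      refine Finset.sum_congr rfl fun g _ => ?_
      by_cases hg : 𝔾.isId g
      · rw [if_pos hg, if_pos hg]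
      · rw [if_neg hg, if_neg hg, delta_zero]
    have huniq := delta_uniq σ (fun g => ∑ i, xs i * α.act g (ts i * one (𝔾.inv g)))
      (fun g => if 𝔾.isId g then one g else 0)
      (fun g => D_sum_mem g _ _ fun i _ => Fmap_coeff_mem hone (ts i) g (xs i))
      (fun g => by
        show (if 𝔾.isId g then one g else 0) ∈ α.D g
        split
        · exact one_memD hone g
        · exact (α.ideal g).zero_mem)
      (h1eq.symm.trans h1A')
    exact ⟨n, xs, ts, huniq⟩
end
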